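/- Let (C, m) together with the involution c be a weakly minimal anti-symmetric G-gapped A∞ algebra, and fix an isomorphism of graded algebras θ : ΛV → A_C = C as in the definition of anti-symmetry, where V is concentrated in odd degrees. Then for every k ≥ 0 and β ∈ G, the operation m_{k,β} is an anti-symmetric Hochschild cochain: m_{k,β}(θ(v₁),…,θ(v_k)) = −(−1)^{s(τ; v₁,…,v_k)} m_{k,β}(θ(v_k),…,θ(v₁)) for all v₁,…,v_k ∈ V. -/

import Mathlib

/-!
Common definitions: gapped `A∞` algebras over the field `𝕂`, graded by `ℤ/N` (`N` even),
with gapping monoid `G ⊆ ℝ≥0`.  Operations are recorded as families of `k`-ary maps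
together with multilinearity and degree conditions; all sign conventions follow the paper.
Since the Koszul signs depend on the degrees of homogeneous arguments, all identities
involving signs are stated on homogeneous tuples.
-/

open scoped BigOperators

noncomputable section

/-- The sign `(−1)^x` for a parity `x : ZMod 2`, valued in `𝕂`. -/
def sgn2 (𝕂 : Type) [Field 𝕂] (x : ZMod 2) : 𝕂 := if x = 0 then 1 else -1

/-- Parity of a degree in `ℤ/N`; for even `N` this is the canonical map `ℤ/N → ℤ/2`. -/
def par2 {N : ℕ} (d : ZMod N) : ZMod 2 := ((ZMod.val d : ℕ) : ZMod 2)

/-- Extension of a tuple by `0`. -/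
def extZ {X : Type} [Zero X] {k : ℕ} (α : Fin k → X) : ℕ → X :=
  fun n => if h : n < k then α ⟨n, h⟩ else 0

/-- The tuple `(A 0, …, A (i₀−1), v, A (i₀+k₂), …)` of length `k₁` obtained by replacing the
`k₂` entries of `A` starting at position `i₀` by the single entry `v`. -/
def insArg {X : Type} [Zero X] (k₁ k₂ i₀ : ℕ) (v : X) (A : ℕ → X) : Fin k₁ → X :=
  fun j => if (j : ℕ) < i₀ then A j else if (j : ℕ) = i₀ then v else A ((j : ℕ) + k₂ - 1)

/-- Multilinearity of a `k`-ary map. -/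
def IsMultilin (𝕂 : Type) [Field 𝕂] {C D : Type} [AddCommGroup C] [Module 𝕂 C]
    [AddCommGroup D] [Module 𝕂 D] {k : ℕ} (f : (Fin k → C) → D) : Prop :=
  (∀ (α : Fin k → C) (j : Fin k) (x y : C),
    f (Function.update α j (x + y)) = f (Function.update α j x) + f (Function.update α j y)) ∧
  (∀ (α : Fin k → C) (j : Fin k) (c : 𝕂) (x : C),
    f (Function.update α j (c • x)) = c • f (Function.update α j x))

/-- The Koszul sign exponent `s(σ;α) = Σ_{i<j, σ(i)>σ(j)} (|α_{σ(i)}|+1)(|α_{σ(j)}|+1)`,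
computed from the degrees `d j = |α_j|`. -/
def koszulSign {N : ℕ} {k : ℕ} (σ : Equiv.Perm (Fin k)) (d : Fin k → ZMod N) : ZMod 2 :=
  ∑ p ∈ Finset.univ.filter (fun p : Fin k × Fin k => p.1 < p.2 ∧ σ p.2 < σ p.1),
    (par2 (d (σ p.1)) + 1) * (par2 (d (σ p.2)) + 1)

/-- `s(τ;α)` for the order-reversal permutation `τ : i ↦ k+1−i`. -/
def revSign {N : ℕ} {k : ℕ} (d : Fin k → ZMod N) : ZMod 2 :=
  koszulSign Fin.revPerm d

/-- A `k`-ary map between graded spaces has degree `t`: it sends homogeneous tuples of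
multidegree `d` into the piece of degree `Σ d + t`. -/
def HasDeg {𝕂 : Type} [Field 𝕂] {N : ℕ} {C D : Type} [AddCommGroup C] [Module 𝕂 C]
    [AddCommGroup D] [Module 𝕂 D] (ℳ : ZMod N → Submodule 𝕂 C)
    (𝒩 : ZMod N → Submodule 𝕂 D) (t : ℤ) {k : ℕ} (f : (Fin k → C) → D) : Prop :=
  ∀ (d : Fin k → ZMod N) (α : Fin k → C), (∀ j, α j ∈ ℳ (d j)) →
    f α ∈ 𝒩 ((∑ j, d j) + (t : ZMod N))

/-- The exponent `Σ_{j<i₀} (|α_j|+1)` appearing in the `A∞` relations (0-indexed). -/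
def insSign {N : ℕ} (D : ℕ → ZMod N) (i₀ : ℕ) : ZMod 2 :=
  ∑ j ∈ Finset.range i₀, (par2 (D j) + 1)

/-- Index set of the `G`-gapped `A∞` relations for inputs of arity `k` and energy `β`:
tuples `(k₁, k₂, i₀, β₁, β₂)` with `k₁+k₂ = k+1`, `i₀ < k₁` (`i₀` is the 0-indexed insertion
position) and `β₁+β₂ = β`.  By the finiteness assumption on `G` this set is finite. -/
def ainfIdx (G : AddSubmonoid ℝ) (k : ℕ) (β : G) : Set (ℕ × ℕ × ℕ × G × G) :=
  {t | t.1 + t.2.1 = k + 1 ∧ t.2.2.1 < t.1 ∧ t.2.2.2.1 + t.2.2.2.2 = β}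

/-- The term of the `A∞`-type relations indexed by `(k₁,k₂,i₀,β₁,β₂)`:
`(−1)^{Σ_{j<i₀}(|α_j|+1)} g_{k₁,β₁}(α₁,…,α_{i₀}, m_{k₂,β₂}(α_{i₀+1},…), …, α_k)`
(outer family `g`, inner family `m`). -/
def ainfTerm (𝕂 : Type) [Field 𝕂] {N : ℕ} {G : AddSubmonoid ℝ} {C D : Type}
    [AddCommGroup C] [Module 𝕂 C] [AddCommGroup D] [Module 𝕂 D]
    (g : ∀ k : ℕ, G → (Fin k → C) → D) (m : ∀ k : ℕ, G → (Fin k → C) → C)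
    {k : ℕ} (d : Fin k → ZMod N) (α : Fin k → C) : ℕ × ℕ × ℕ × G × G → D :=
  fun t =>
    sgn2 𝕂 (insSign (extZ d) t.2.2.1) •
      g t.1 t.2.2.2.1
        (insArg t.1 t.2.1 t.2.2.1
          (m t.2.1 t.2.2.2.2 fun l => extZ α (t.2.2.1 + (l : ℕ))) (extZ α))

/-- A `G`-gapped `A∞` algebra structure on the graded space `(C, ℳ)`: operations
`m_{k,β}` that are multilinear of degree `2−k`, with `m_{0,0} = 0`, satisfying the
`G`-gapped `A∞` relations on homogeneous tuples. -/
structure IsGappedAinf (𝕂 : Type) [Field 𝕂] {N : ℕ} (G : AddSubmonoid ℝ) {C : Type}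
    [AddCommGroup C] [Module 𝕂 C] (ℳ : ZMod N → Submodule 𝕂 C)
    (m : ∀ k : ℕ, G → (Fin k → C) → C) : Prop where
  multilinear : ∀ (k : ℕ) (β : G), IsMultilin 𝕂 (m k β)
  deg : ∀ (k : ℕ) (β : G), HasDeg ℳ ℳ (2 - (k : ℤ)) (m k β)
  zero : m 0 0 = 0
  rel : ∀ (k : ℕ) (β : G) (d : Fin k → ZMod N) (α : Fin k → C), (∀ j, α j ∈ ℳ (d j)) →
    (∑ᶠ t ∈ ainfIdx G k β, ainfTerm 𝕂 m m d α t) = 0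

/-- A `G`-gapped `A∞` pre-homomorphism: maps `f_{k,β}`, multilinear of degree `1−k`,
with `f_{0,0} = 0`. -/
structure IsGappedPreHom (𝕂 : Type) [Field 𝕂] {N : ℕ} (G : AddSubmonoid ℝ) {C D : Type}
    [AddCommGroup C] [Module 𝕂 C] [AddCommGroup D] [Module 𝕂 D]
    (ℳ : ZMod N → Submodule 𝕂 C) (𝒩 : ZMod N → Submodule 𝕂 D)
    (f : ∀ k : ℕ, G → (Fin k → C) → D) : Prop where
  multilinear : ∀ (k : ℕ) (β : G), IsMultilin 𝕂 (f k β)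
  deg : ∀ (k : ℕ) (β : G), HasDeg ℳ 𝒩 (1 - (k : ℤ)) (f k β)
  zero : f 0 0 = 0

/-- Index set for the composition-type sums: tuples `(l, (r₁,…,r_l), β₀, (β₁,…,β_l))`
with `r₁+⋯+r_l = k` and `β₀+β₁+⋯+β_l = β`. -/
def homIdx (G : AddSubmonoid ℝ) (k : ℕ) (β : G) :
    Set (Σ l : ℕ, (Fin l → ℕ) × G × (Fin l → G)) :=
  {t | (∑ j, t.2.1 j) = k ∧ t.2.2.1 + (∑ j, t.2.2.2 j) = β}

/-- Offset `r₁ + ⋯ + r_{j}` of the `j`-th chunk of the inputs. -/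
def chunkOff {l : ℕ} (r : Fin l → ℕ) (j : Fin l) : ℕ :=
  ∑ j' ∈ Finset.univ.filter (fun j' : Fin l => (j' : ℕ) < (j : ℕ)), r j'

/-- The term `g_{l,β₀}(f_{r₁,β₁}(α₁,…,α_{r₁}), …, f_{r_l,β_l}(α_{k−r_l+1},…,α_k))`. -/
def homTerm {G : AddSubmonoid ℝ} {C D E : Type} [Zero C]
    (g : ∀ l : ℕ, G → (Fin l → D) → E) (f : ∀ k : ℕ, G → (Fin k → C) → D)
    {k : ℕ} (α : Fin k → C) : (Σ l : ℕ, (Fin l → ℕ) × G × (Fin l → G)) → E :=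
  fun t =>
    g t.1 t.2.2.1 fun j =>
      f (t.2.1 j) (t.2.2.2 j) fun x => extZ α (chunkOff t.2.1 j + (x : ℕ))

/-- Composition of `G`-gapped `A∞` pre-homomorphisms. -/
def compPre (G : AddSubmonoid ℝ) {C D E : Type} [Zero C] [AddCommMonoid E]
    (g : ∀ l : ℕ, G → (Fin l → D) → E) (f : ∀ k : ℕ, G → (Fin k → C) → D) :
    ∀ k : ℕ, G → (Fin k → C) → E :=
  fun k β α => ∑ᶠ t ∈ homIdx G k β, homTerm g f α t

/-- A `G`-gapped `A∞` homomorphism from `(C, mC)` to `(D, mD)`. -/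
structure IsGappedHom (𝕂 : Type) [Field 𝕂] {N : ℕ} (G : AddSubmonoid ℝ) {C D : Type}
    [AddCommGroup C] [Module 𝕂 C] [AddCommGroup D] [Module 𝕂 D]
    (ℳ : ZMod N → Submodule 𝕂 C) (𝒩 : ZMod N → Submodule 𝕂 D)
    (mC : ∀ k : ℕ, G → (Fin k → C) → C) (mD : ∀ k : ℕ, G → (Fin k → D) → D)
    (f : ∀ k : ℕ, G → (Fin k → C) → D) : Prop where
  prehom : IsGappedPreHom 𝕂 G ℳ 𝒩 f
  hom : ∀ (k : ℕ) (β : G) (d : Fin k → ZMod N) (α : Fin k → C), (∀ j, α j ∈ ℳ (d j)) →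
    (∑ᶠ t ∈ homIdx G k β, homTerm mD f α t) = ∑ᶠ t ∈ ainfIdx G k β, ainfTerm 𝕂 f mC d α t

/-- `f'` is the opposite family of `f`:
`f'_{k,β}(α₁,…,α_k) = (−1)^{s(τ;α)+k+1} f_{k,β}(α_k,…,α₁)` on homogeneous tuples. -/
def IsOppFam (𝕂 : Type) [Field 𝕂] {N : ℕ} {G : AddSubmonoid ℝ} {C D : Type}
    [AddCommGroup C] [Module 𝕂 C] [AddCommGroup D] [Module 𝕂 D]
    (ℳ : ZMod N → Submodule 𝕂 C)
    (f f' : ∀ k : ℕ, G → (Fin k → C) → D) : Prop :=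
  ∀ (k : ℕ) (β : G) (d : Fin k → ZMod N) (α : Fin k → C), (∀ j, α j ∈ ℳ (d j)) →
    f' k β α = sgn2 𝕂 (revSign d + (k : ZMod 2) + 1) • f k β fun j => α (Fin.rev j)

/-- Self-duality of a family with respect to involutions `cC`, `cD`:
`f_{k,β}(c(α₁),…,c(α_k)) = (−1)^{s(τ;α)+k+1} c(f_{k,β}(α_k,…,α₁))` on homogeneous tuples. -/
def IsSelfDualFam (𝕂 : Type) [Field 𝕂] {N : ℕ} {G : AddSubmonoid ℝ} {C D : Type}
    [AddCommGroup C] [Module 𝕂 C] [AddCommGroup D] [Module 𝕂 D]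
    (ℳ : ZMod N → Submodule 𝕂 C) (cC : C →ₗ[𝕂] C) (cD : D →ₗ[𝕂] D)
    (f : ∀ k : ℕ, G → (Fin k → C) → D) : Prop :=
  ∀ (k : ℕ) (β : G) (d : Fin k → ZMod N) (α : Fin k → C), (∀ j, α j ∈ ℳ (d j)) →
    f k β (fun j => cC (α j)) =
      sgn2 𝕂 (revSign d + (k : ZMod 2) + 1) • cD (f k β fun j => α (Fin.rev j))

/-- The operation `m_{1,0}`, as an endomorphism of `C`. -/
def dOne {G : AddSubmonoid ℝ} {C : Type} [Zero C] (m : ∀ k : ℕ, G → (Fin k → C) → C) :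
    C → C :=
  fun x => m 1 0 ![x]

/-- The Hochschild coboundary of a `k`-cochain `η`, evaluated on a homogeneous `(k+1)`-tuple
of multidegree `d`.  Here `P a b x y` is the (possibly sign-twisted) product of `x ∈ ℳ a`
and `y ∈ ℳ b`, `e` is the parity of the internal degree `|η|` of `η` (as a map
`A[1]^{⊗k} → A`), and `out` is such that `η` sends tuples of multidegree `d'` into degree
`Σ d' + out`.  The formula is
`𝔟(η)(α₁,…,α_{k+1}) = (−1)^{|η|(|α₁|+1)+1} α₁·η(α₂,…,α_{k+1})`
`+ Σ_{i=1}^{k} (−1)^{|η|+1+Σ_{j=1}^{i}(|α_j|+1)} η(α₁,…,α_i·α_{i+1},…,α_{k+1})`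
`+ (−1)^{|η|+Σ_{j=1}^{k}(|α_j|+1)} η(α₁,…,α_k)·α_{k+1}`. -/
def hochB (𝕂 : Type) [Field 𝕂] {N : ℕ} {C : Type} [AddCommGroup C] [Module 𝕂 C]
    (P : ZMod N → ZMod N → C → C → C) (e : ZMod 2) (out : ZMod N)
    {k : ℕ} (η : (Fin k → C) → C) (d : Fin (k + 1) → ZMod N) (α : Fin (k + 1) → C) : C :=
  sgn2 𝕂 (e * (par2 (d 0) + 1) + 1) •
      P (d 0) ((∑ j : Fin k, d j.succ) + out) (α 0) (η fun j => α j.succ)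
    + (∑ i₀ ∈ Finset.range k,
        sgn2 𝕂 (e + 1 + ∑ j ∈ Finset.range (i₀ + 1), (par2 (extZ d j) + 1)) •
          η (insArg k 2 i₀
              (P (extZ d i₀) (extZ d (i₀ + 1)) (extZ α i₀) (extZ α (i₀ + 1))) (extZ α)))
    + sgn2 𝕂 (e + ∑ j ∈ Finset.range k, (par2 (extZ d j) + 1)) •
        P ((∑ j : Fin k, d j.castSucc) + out) (d (Fin.last k))
          (η fun j => α j.castSucc) (α (Fin.last k))

/-- The product of the underlying algebra of an `A∞` algebra:
`x ∘ y = (−1)^{|x|} m_{2,0}(x,y)` for `x` of degree `a`. -/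
def ulP (𝕂 : Type) [Field 𝕂] {N : ℕ} {G : AddSubmonoid ℝ} {C : Type} [AddCommGroup C]
    [Module 𝕂 C] (m : ∀ k : ℕ, G → (Fin k → C) → C) :
    ZMod N → ZMod N → C → C → C :=
  fun a _ x y => sgn2 𝕂 (par2 a) • m 2 0 ![x, y]

/-- The Hochschild coboundary for a graded associative algebra `A`, of a `k`-cochain `η`
of internal degree `t` (as a map `A[1]^{⊗k} → A`, so that `η` sends homogeneous tuples of
multidegree `d` into degree `Σ d + t − k`). -/
def hochBAlg (𝕂 : Type) [Field 𝕂] {N : ℕ} {A : Type} [Ring A] [Algebra 𝕂 A]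
    (t : ZMod N) {k : ℕ} (η : (Fin k → A) → A) (d : Fin (k + 1) → ZMod N)
    (α : Fin (k + 1) → A) : A :=
  hochB 𝕂 (fun _ _ x y => x * y) (par2 t) (t - (k : ZMod N)) η d α

/-- A Hochschild `k`-cochain of the graded algebra `(A, ℳ)` of internal degree `t`:
a multilinear map `A^{⊗k} → A`, regarded as a map `A[1]^{⊗k} → A` of degree `t`. -/
def IsHochCochain (𝕂 : Type) [Field 𝕂] {N : ℕ} {A : Type} [Ring A] [Algebra 𝕂 A]
    (ℳ : ZMod N → Submodule 𝕂 A) (t : ZMod N) {k : ℕ} (η : (Fin k → A) → A) : Prop :=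
  IsMultilin 𝕂 η ∧
    ∀ (d : Fin k → ZMod N) (α : Fin k → A), (∀ j, α j ∈ ℳ (d j)) →
      η α ∈ ℳ ((∑ j, d j) + t - (k : ZMod N))

/-- The graded-commutativity relation defining the free graded commutative algebra on the
graded vector space `(V, 𝒱)`: `v ⊗ w = (−1)^{|v||w|} w ⊗ v` for homogeneous `v, w`. -/
inductive GCRel (𝕂 : Type) [Field 𝕂] {N : ℕ} (V : Type) [AddCommGroup V] [Module 𝕂 V]
    (𝒱 : ZMod N → Submodule 𝕂 V) : TensorAlgebra 𝕂 V → TensorAlgebra 𝕂 V → Prop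
  | comm : ∀ {a b : ZMod N} {v w : V}, v ∈ 𝒱 a → w ∈ 𝒱 b →
      GCRel 𝕂 V 𝒱 (TensorAlgebra.ι 𝕂 v * TensorAlgebra.ι 𝕂 w)
        (sgn2 𝕂 (par2 a * par2 b) • (TensorAlgebra.ι 𝕂 w * TensorAlgebra.ι 𝕂 v))

/-- The free graded commutative algebra `ΛV` on the graded vector space `(V, 𝒱)`: the
quotient of the tensor algebra by the two-sided ideal generated by
`v⊗w − (−1)^{|v||w|} w⊗v`. -/
abbrev FreeGCA (𝕂 : Type) [Field 𝕂] {N : ℕ} (V : Type) [AddCommGroup V] [Module 𝕂 V]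
    (𝒱 : ZMod N → Submodule 𝕂 V) : Type :=
  RingQuot (GCRel 𝕂 V 𝒱)

/-- The image of `v ∈ V` in `ΛV`. -/
def gcaGen (𝕂 : Type) [Field 𝕂] {N : ℕ} (V : Type) [AddCommGroup V] [Module 𝕂 V]
    (𝒱 : ZMod N → Submodule 𝕂 V) (v : V) : FreeGCA 𝕂 V 𝒱 :=
  RingQuot.mkAlgHom 𝕂 (GCRel 𝕂 V 𝒱) (TensorAlgebra.ι 𝕂 v)

/-- The grading of `ΛV`: the piece of degree `e` is spanned by products of homogeneous
generators whose degrees sum to `e`. -/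
def gcaGrade (𝕂 : Type) [Field 𝕂] {N : ℕ} (V : Type) [AddCommGroup V] [Module 𝕂 V]
    (𝒱 : ZMod N → Submodule 𝕂 V) (e : ZMod N) : Submodule 𝕂 (FreeGCA 𝕂 V 𝒱) :=
  Submodule.span 𝕂 {x | ∃ l : List (ZMod N × V), (∀ p ∈ l, p.2 ∈ 𝒱 p.1) ∧
    (l.map Prod.fst).sum = e ∧ x = (l.map fun p => gcaGen 𝕂 V 𝒱 p.2).prod}
end

noncomputable section AuxLemmas

variable {𝕂 : Type} [Field 𝕂] {N : ℕ}

lemma em2 : ∀ x : ZMod 2, x = 0 ∨ x = 1 := by decide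

lemma sgn2_zero : sgn2 𝕂 0 = 1 := if_pos rfl

lemma sgn2_one : sgn2 𝕂 1 = -1 := by simp [sgn2]

lemma sgn2_add (x y : ZMod 2) : sgn2 𝕂 (x + y) = sgn2 𝕂 x * sgn2 𝕂 y := by
  rcases em2 x with hx | hx <;> rcases em2 y with hy | hy <;>
    subst hx <;> subst hy <;>
    simp [sgn2, (by decide : (1 + 1 : ZMod 2) = 0), (by decide : (1 : ZMod 2) ≠ 0)]

lemma sgn2_mul_self (x : ZMod 2) : sgn2 𝕂 x * sgn2 𝕂 x = 1 := by
  rcases em2 x with hx | hx <;> subst hx <;>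
    simp [sgn2, (by decide : (1 : ZMod 2) ≠ 0)]

lemma sgn2_smul_cancel {M : Type} [AddCommGroup M] [Module 𝕂 M] (x : ZMod 2) (z : M) :
    sgn2 𝕂 x • sgn2 𝕂 x • z = z := by
  rw [smul_smul, sgn2_mul_self, one_smul]

lemma par2_eq_cast (hN : 2 ∣ N) (d : ZMod N) : par2 d = ZMod.castHom hN (ZMod 2) d := by
  cases N with
  | zero =>
    show ((Int.natAbs d : ℕ) : ZMod 2) = (Int.cast d : ZMod 2)
    rcases Int.natAbs_eq d with h | h
    · conv_rhs => rw [h]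
      rw [Int.cast_natCast]
    · conv_rhs => rw [h]
      rw [Int.cast_neg, Int.cast_natCast]
      exact (CharTwo.neg_eq _).symm
  | succ n => rfl

lemma par2_zero (hN : 2 ∣ N) : par2 (0 : ZMod N) = 0 := by
  rw [par2_eq_cast hN]; simp

lemma par2_add (hN : 2 ∣ N) (x y : ZMod N) : par2 (x + y) = par2 x + par2 y := by
  rw [par2_eq_cast hN, par2_eq_cast hN, par2_eq_cast hN, map_add]

lemma par2_intCast (hN : 2 ∣ N) (z : ℤ) : par2 ((z : ZMod N)) = (z : ZMod 2) := by
  rw [par2_eq_cast hN, map_intCast]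

lemma par2_sum (hN : 2 ∣ N) {k : ℕ} (d : Fin k → ZMod N) :
    par2 (∑ j, d j) = ∑ j, par2 (d j) := by
  rw [par2_eq_cast hN, map_sum]
  exact Finset.sum_congr rfl fun j _ => (par2_eq_cast hN (d j)).symm

end AuxLemmas
noncomputable section AuxLemmas2

variable {𝕂 : Type} [Field 𝕂] {N : ℕ} {C D : Type} [AddCommGroup C] [Module 𝕂 C]
  [AddCommGroup D] [Module 𝕂 D]

lemma multilin_zero {k : ℕ} {f : (Fin k → C) → D} (hf : IsMultilin 𝕂 f)
    (α : Fin k → C) (j₀ : Fin k) (h : α j₀ = 0) : f α = 0 := by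
  have h2 := hf.2 α j₀ (0 : 𝕂) (0 : C)
  rw [zero_smul, zero_smul] at h2
  rw [← h, Function.update_eq_self] at h2
  exact h2

lemma multilin_neg {k : ℕ} {f : (Fin k → C) → D} (hf : IsMultilin 𝕂 f)
    (α : Fin k → C) : f (fun j => -α j) = ((-1 : 𝕂) ^ k) • f α := by
  classical
  suffices H : ∀ S : Finset (Fin k),
      f (fun j => if j ∈ S then -α j else α j) = ((-1 : 𝕂) ^ S.card) • f α by
    have h := H Finset.univ
    simpa using h
  intro S
  induction S using Finset.induction_on with
  | empty => simp
  | @insert i S hi ih =>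
    have harg : (fun j => if j ∈ insert i S then -α j else α j)
        = Function.update (fun j => if j ∈ S then -α j else α j) i ((-1 : 𝕂) • α i) := by
      funext j
      by_cases hj : j = i
      · subst hj; simp [hi]
      · simp [Function.update, hj, Finset.mem_insert]
    rw [harg, hf.2]
    have : Function.update (fun j => if j ∈ S then -α j else α j) i (α i)
        = fun j => if j ∈ S then -α j else α j := by
      funext j
      by_cases hj : j = i
      · subst hj; simp [hi]
      · simp [Function.update, hj]
    rw [this, ih, Finset.card_insert_of_notMem hi, pow_succ, smul_smul, mul_comm]

lemma upd0 (x y z : C) : Function.update ![x, y] 0 z = ![z, y] := by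
  funext i
  fin_cases i <;> simp [Function.update]

lemma upd1 (x y z : C) : Function.update ![x, y] 1 z = ![x, z] := by
  funext i
  fin_cases i <;> simp [Function.update]

lemma bilin_smul_left {f : (Fin 2 → C) → D} (hf : IsMultilin 𝕂 f) (s : 𝕂) (x y : C) :
    f ![s • x, y] = s • f ![x, y] := by
  have h := hf.2 ![x, y] 0 s x
  rwa [upd0, upd0] at h

lemma bilin_smul_right {f : (Fin 2 → C) → D} (hf : IsMultilin 𝕂 f) (s : 𝕂) (x y : C) :
    f ![x, s • y] = s • f ![x, y] := by
  have h := hf.2 ![x, y] 1 s y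
  rwa [upd1, upd1] at h

lemma revSign_two (d : Fin 2 → ZMod N) :
    revSign d = (par2 (d 0) + 1) * (par2 (d 1) + 1) := by
  unfold revSign koszulSign
  have hfil : Finset.univ.filter
      (fun p : Fin 2 × Fin 2 => p.1 < p.2 ∧ Fin.revPerm p.2 < Fin.revPerm p.1)
      = {((0 : Fin 2), (1 : Fin 2))} := by decide
  rw [hfil, Finset.sum_singleton]
  have h0 : Fin.revPerm (0 : Fin 2) = 1 := by decide
  have h1 : Fin.revPerm (1 : Fin 2) = 0 := by decide
  rw [h0, h1]
  ring

lemma revSign_all_odd {k : ℕ} (a : Fin k → ZMod N) (h : ∀ j, par2 (a j) = 1) :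
    revSign a = 0 := by
  unfold revSign koszulSign
  refine Finset.sum_eq_zero fun p _ => ?_
  rw [h, h, (by decide : (1 + 1 : ZMod 2) = 0), zero_mul]

end AuxLemmas2
noncomputable section AuxLemmas3

variable {𝕂 : Type} [Field 𝕂] {N : ℕ} {V : Type} [AddCommGroup V] [Module 𝕂 V]
  {𝒱 : ZMod N → Submodule 𝕂 V}

lemma one_mem_grade : (1 : FreeGCA 𝕂 V 𝒱) ∈ gcaGrade 𝕂 V 𝒱 0 :=
  Submodule.subset_span ⟨[], by simp, by simp, by simp⟩

lemma gen_mem_grade {a : ZMod N} {v : V} (hv : v ∈ 𝒱 a) :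
    gcaGen 𝕂 V 𝒱 v ∈ gcaGrade 𝕂 V 𝒱 a :=
  Submodule.subset_span ⟨[(a, v)], by simpa using hv, by simp, by simp⟩

lemma prod_mem_grade (L : List (ZMod N × V)) (hL : ∀ p ∈ L, p.2 ∈ 𝒱 p.1) :
    (L.map fun p => gcaGen 𝕂 V 𝒱 p.2).prod ∈ gcaGrade 𝕂 V 𝒱 ((L.map Prod.fst).sum) :=
  Submodule.subset_span ⟨L, hL, rfl, rfl⟩

lemma gen_swap {a b : ZMod N} {v w : V} (hv : v ∈ 𝒱 a) (hw : w ∈ 𝒱 b) :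
    gcaGen 𝕂 V 𝒱 v * gcaGen 𝕂 V 𝒱 w
      = sgn2 𝕂 (par2 a * par2 b) • (gcaGen 𝕂 V 𝒱 w * gcaGen 𝕂 V 𝒱 v) := by
  have h := RingQuot.mkAlgHom_rel 𝕂 (GCRel.comm (𝕂 := 𝕂) hv hw)
  simpa [gcaGen, map_mul, map_smul] using h

lemma gen_swap' {a b : ZMod N} {v w : V} (hv : v ∈ 𝒱 a) (hw : w ∈ 𝒱 b) :
    gcaGen 𝕂 V 𝒱 w * gcaGen 𝕂 V 𝒱 v
      = sgn2 𝕂 (par2 a * par2 b) • (gcaGen 𝕂 V 𝒱 v * gcaGen 𝕂 V 𝒱 w) := by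
  rw [gen_swap hv hw, smul_smul, sgn2_mul_self, one_smul]

lemma grade_comm (hN : 2 ∣ N) {b : ZMod N} {y : FreeGCA 𝕂 V 𝒱}
    (hy : y ∈ gcaGrade 𝕂 V 𝒱 b) {a : ZMod N} {v : V} (hv : v ∈ 𝒱 a) :
    y * gcaGen 𝕂 V 𝒱 v = sgn2 𝕂 (par2 a * par2 b) • (gcaGen 𝕂 V 𝒱 v * y) := by
  induction hy using Submodule.span_induction with
  | mem x hx =>
    obtain ⟨L, hL, hsum, rfl⟩ := hx
    subst hsum
    induction L with
    | nil => simp [par2_zero hN, sgn2_zero]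
    | cons p L ih =>
      have hstep := ih (fun q hq => hL q (List.mem_cons_of_mem p hq))
      simp only [List.map_cons, List.prod_cons, List.sum_cons]
      rw [mul_assoc, hstep, mul_smul_comm, ← mul_assoc,
        gen_swap' hv (hL p List.mem_cons_self),
        smul_mul_assoc, smul_smul, ← sgn2_add, mul_assoc]
      congr 2
      rw [par2_add hN]
      ring
  | zero => simp
  | add x z hx hz ihx ihz => rw [add_mul, ihx, ihz, mul_add, smul_add]
  | smul r x hx ihx => rw [smul_mul_assoc, ihx, mul_smul_comm, smul_comm]

end AuxLemmas3
noncomputable section AuxLemmas4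

variable {𝕂 : Type} [Field 𝕂] {N : ℕ} {G : AddSubmonoid ℝ}
  {C : Type} [AddCommGroup C] [Module 𝕂 C] {V : Type} [AddCommGroup V] [Module 𝕂 V]

lemma c_theta_list (hN : 2 ∣ N) (ℳ : ZMod N → Submodule 𝕂 C)
    (m : ∀ k : ℕ, G → (Fin k → C) → C) (hml : ∀ (k : ℕ) (β : G), IsMultilin 𝕂 (m k β))
    (c : C →ₗ[𝕂] C) (hcinv : ∀ x, c (c x) = x)
    (hcdeg : ∀ (e : ZMod N) (x : C), x ∈ ℳ e → c x ∈ ℳ e)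
    (hmsd : IsSelfDualFam 𝕂 ℳ c c m)
    (𝒱 : ZMod N → Submodule 𝕂 V)
    (hodd : ∀ e : ZMod N, par2 e = 0 → 𝒱 e = ⊥)
    (θ : FreeGCA 𝕂 V 𝒱 ≃ₗ[𝕂] C)
    (hθgr : ∀ e : ZMod N, (gcaGrade 𝕂 V 𝒱 e).map (θ : FreeGCA 𝕂 V 𝒱 →ₗ[𝕂] C) = ℳ e)
    (hθmul : ∀ (a b : ZMod N) (x y : FreeGCA 𝕂 V 𝒱),
      x ∈ gcaGrade 𝕂 V 𝒱 a → y ∈ gcaGrade 𝕂 V 𝒱 b →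
      θ (x * y) = sgn2 𝕂 (par2 a) • m 2 0 ![θ x, θ y])
    (hcgen : ∀ (a : ZMod N) (v : V), v ∈ 𝒱 a →
      c (θ (gcaGen 𝕂 V 𝒱 v)) = -θ (gcaGen 𝕂 V 𝒱 v)) :
    ∀ L : List (ZMod N × V), (∀ p ∈ L, p.2 ∈ 𝒱 p.1) →
      c (θ ((L.map fun p => gcaGen 𝕂 V 𝒱 p.2).prod))
        = sgn2 𝕂 (par2 ((L.map Prod.fst).sum))
            • θ ((L.map fun p => gcaGen 𝕂 V 𝒱 p.2).prod) := by
  -- first : c (θ 1) = θ 1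
  have h1g : (1 : FreeGCA 𝕂 V 𝒱) ∈ gcaGrade 𝕂 V 𝒱 0 := one_mem_grade
  have hθ1 : θ 1 ∈ ℳ 0 := by
    rw [← hθgr 0]; exact ⟨1, h1g, rfl⟩
  have hw : c (θ 1) ∈ ℳ 0 := hcdeg 0 _ hθ1
  have hcθ1 : c (θ 1) = θ 1 := by
    have hw2 := hw
    rw [← hθgr 0] at hw2
    obtain ⟨z, hz, hθz⟩ := hw2
    have key : m 2 0 ![c (θ 1), θ 1] = c (θ 1) := by
      have h := hθmul 0 0 z 1 hz h1g
      rw [mul_one, par2_zero hN, sgn2_zero, one_smul] at h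
      rw [show θ.toLinearMap z = θ z from rfl] at hθz
      rw [hθz] at h
      exact h.symm
    have hsd := hmsd 2 0 ![0, 0] ![θ 1, c (θ 1)] (by
      intro j; fin_cases j <;> simpa)
    have hfun1 : (fun j => c (![θ 1, c (θ 1)] j)) = ![c (θ 1), θ 1] := by
      funext j; fin_cases j <;> simp [hcinv]
    have hfun2 : (fun j => ![θ 1, c (θ 1)] (Fin.rev j)) = ![c (θ 1), θ 1] := by
      funext j
      fin_cases j <;> rfl
    have hsgn : revSign (![0, 0] : Fin 2 → ZMod N) + ((2 : ℕ) : ZMod 2) + 1 = 0 := by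
      rw [revSign_two]
      simp only [Matrix.cons_val_zero, Matrix.cons_val_one, Matrix.head_cons, par2_zero hN]
      decide
    rw [hfun1, hfun2, hsgn, sgn2_zero, one_smul, key] at hsd
    rw [hsd, hcinv]
  intro L
  induction L with
  | nil =>
    intro _
    simpa [par2_zero hN, sgn2_zero] using hcθ1
  | cons p L ih =>
    rcases p with ⟨a, v⟩
    intro hL
    have hv : v ∈ 𝒱 a := hL (a, v) List.mem_cons_self
    have hLtail : ∀ q ∈ L, q.2 ∈ 𝒱 q.1 := fun q hq => hL q (List.mem_cons_of_mem _ hq)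
    have ihy := ih hLtail
    set y : FreeGCA 𝕂 V 𝒱 := (L.map fun p => gcaGen 𝕂 V 𝒱 p.2).prod with hy
    set b : ZMod N := (L.map Prod.fst).sum with hb
    have hyg : y ∈ gcaGrade 𝕂 V 𝒱 b := prod_mem_grade L hLtail
    have hgv : gcaGen 𝕂 V 𝒱 v ∈ gcaGrade 𝕂 V 𝒱 a := gen_mem_grade hv
    simp only [List.map_cons, List.prod_cons, List.sum_cons]
    by_cases hpa : par2 a = 0
    · have hv0 : v = 0 := by
        have := hodd a hpa ▸ hv
        simpa using this
      have : gcaGen 𝕂 V 𝒱 v = 0 := by simp [hv0, gcaGen]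
      simp [this]
    · have hpa1 : par2 a = 1 := (em2 _).resolve_left hpa
      have hθy : θ y ∈ ℳ b := by rw [← hθgr b]; exact ⟨y, hyg, rfl⟩
      have hθgv : θ (gcaGen 𝕂 V 𝒱 v) ∈ ℳ a := by
        rw [← hθgr a]; exact ⟨_, hgv, rfl⟩
      have hsd := hmsd 2 0 ![b, a] ![θ y, θ (gcaGen 𝕂 V 𝒱 v)] (by
        intro j; fin_cases j <;> simpa)
      have hfun1 : (fun j => c (![θ y, θ (gcaGen 𝕂 V 𝒱 v)] j))
          = ![sgn2 𝕂 (par2 b) • θ y, (-1 : 𝕂) • θ (gcaGen 𝕂 V 𝒱 v)] := by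
        funext j
        fin_cases j
        · simpa using ihy
        · simpa using hcgen a v hv
      have hfun2 : (fun j => ![θ y, θ (gcaGen 𝕂 V 𝒱 v)] (Fin.rev j))
          = ![θ (gcaGen 𝕂 V 𝒱 v), θ y] := by
        funext j
        fin_cases j <;> rfl
      have hsgn : revSign (![b, a] : Fin 2 → ZMod N) + ((2 : ℕ) : ZMod 2) + 1 = 1 := by
        rw [revSign_two]
        simp only [Matrix.cons_val_zero, Matrix.cons_val_one, Matrix.head_cons, hpa1]
        rw [show ((1 : ZMod 2) + 1) = 0 by decide]
        rw [mul_zero]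
        decide
      rw [hfun1, hfun2, hsgn, sgn2_one] at hsd
      rw [bilin_smul_left (hml 2 0), bilin_smul_right (hml 2 0)] at hsd
      -- hsd : sgn2 pb • (-1) • m ![θy, θgv] = -1 • c (m ![θgv, θy])
      have hkey : c (m 2 0 ![θ (gcaGen 𝕂 V 𝒱 v), θ y])
          = sgn2 𝕂 (par2 b) • m 2 0 ![θ y, θ (gcaGen 𝕂 V 𝒱 v)] := by
        have := hsd
        rw [neg_one_smul, neg_one_smul, smul_neg, neg_inj] at this
        exact this.symm
      have hm1 : m 2 0 ![θ (gcaGen 𝕂 V 𝒱 v), θ y]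
          = sgn2 𝕂 (par2 a) • θ (gcaGen 𝕂 V 𝒱 v * y) := by
        rw [hθmul a b _ y hgv hyg, sgn2_smul_cancel]
      have hm2 : m 2 0 ![θ y, θ (gcaGen 𝕂 V 𝒱 v)]
          = sgn2 𝕂 (par2 b) • θ (y * gcaGen 𝕂 V 𝒱 v) := by
        rw [hθmul b a y _ hyg hgv, sgn2_smul_cancel]
      have hcm : y * gcaGen 𝕂 V 𝒱 v
          = sgn2 𝕂 (par2 a * par2 b) • (gcaGen 𝕂 V 𝒱 v * y) :=
        grade_comm hN hyg hv
      rw [← hy]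
      calc c (θ (gcaGen 𝕂 V 𝒱 v * y))
          = c (sgn2 𝕂 (par2 a) • m 2 0 ![θ (gcaGen 𝕂 V 𝒱 v), θ y]) := by
            rw [hθmul a b _ y hgv hyg]
        _ = sgn2 𝕂 (par2 a) • c (m 2 0 ![θ (gcaGen 𝕂 V 𝒱 v), θ y]) := map_smul c _ _
        _ = sgn2 𝕂 (par2 a) • sgn2 𝕂 (par2 b) • m 2 0 ![θ y, θ (gcaGen 𝕂 V 𝒱 v)] := by
            rw [hkey]
        _ = sgn2 𝕂 (par2 a) • sgn2 𝕂 (par2 b) • sgn2 𝕂 (par2 b)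
              • θ (y * gcaGen 𝕂 V 𝒱 v) := by rw [hm2]
        _ = sgn2 𝕂 (par2 a) • sgn2 𝕂 (par2 b) • sgn2 𝕂 (par2 b)
              • sgn2 𝕂 (par2 a * par2 b) • θ (gcaGen 𝕂 V 𝒱 v * y) := by
            rw [hcm, map_smul]
        _ = sgn2 𝕂 (par2 (a + b)) • θ (gcaGen 𝕂 V 𝒱 v * y) := by
            rw [smul_smul, smul_smul, smul_smul, ← sgn2_add, ← sgn2_add, ← sgn2_add]
            congr 1
            rw [par2_add hN, hpa1]
            rcases em2 (par2 b) with h | h <;> rw [h] <;>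
              exact congrArg (sgn2 𝕂) (by decide)
  
end AuxLemmas4
noncomputable section AuxLemmas5

variable {𝕂 : Type} [Field 𝕂] {N : ℕ} {G : AddSubmonoid ℝ}
  {C : Type} [AddCommGroup C] [Module 𝕂 C] {V : Type} [AddCommGroup V] [Module 𝕂 V]

lemma sgn2_natCast_pow (k : ℕ) : ((-1 : 𝕂) ^ k) = sgn2 𝕂 ((k : ℕ) : ZMod 2) := by
  induction k with
  | zero => simp [sgn2_zero]
  | succ n ih =>
    rw [pow_succ, ih, Nat.cast_succ, sgn2_add, sgn2_one]

lemma c_theta_grade (hN : 2 ∣ N) (ℳ : ZMod N → Submodule 𝕂 C)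
    (m : ∀ k : ℕ, G → (Fin k → C) → C) (hml : ∀ (k : ℕ) (β : G), IsMultilin 𝕂 (m k β))
    (c : C →ₗ[𝕂] C) (hcinv : ∀ x, c (c x) = x)
    (hcdeg : ∀ (e : ZMod N) (x : C), x ∈ ℳ e → c x ∈ ℳ e)
    (hmsd : IsSelfDualFam 𝕂 ℳ c c m)
    (𝒱 : ZMod N → Submodule 𝕂 V)
    (hodd : ∀ e : ZMod N, par2 e = 0 → 𝒱 e = ⊥)
    (θ : FreeGCA 𝕂 V 𝒱 ≃ₗ[𝕂] C)
    (hθgr : ∀ e : ZMod N, (gcaGrade 𝕂 V 𝒱 e).map (θ : FreeGCA 𝕂 V 𝒱 →ₗ[𝕂] C) = ℳ e)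
    (hθmul : ∀ (a b : ZMod N) (x y : FreeGCA 𝕂 V 𝒱),
      x ∈ gcaGrade 𝕂 V 𝒱 a → y ∈ gcaGrade 𝕂 V 𝒱 b →
      θ (x * y) = sgn2 𝕂 (par2 a) • m 2 0 ![θ x, θ y])
    (hcgen : ∀ (a : ZMod N) (v : V), v ∈ 𝒱 a →
      c (θ (gcaGen 𝕂 V 𝒱 v)) = -θ (gcaGen 𝕂 V 𝒱 v))
    (e : ZMod N) (x : FreeGCA 𝕂 V 𝒱) (hx : x ∈ gcaGrade 𝕂 V 𝒱 e) :
    c (θ x) = sgn2 𝕂 (par2 e) • θ x := by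
  induction hx using Submodule.span_induction with
  | mem x hx =>
    obtain ⟨L, hL, hsum, rfl⟩ := hx
    subst hsum
    exact c_theta_list hN ℳ m hml c hcinv hcdeg hmsd 𝒱 hodd θ hθgr hθmul hcgen L hL
  | zero => simp
  | add x z hx hz ihx ihz => rw [map_add, map_add, ihx, ihz, smul_add]
  | smul r x hx ihx => rw [map_smul, map_smul, ihx, smul_comm]

end AuxLemmas5

/-- Let `(C, m)` together with the involution `c` be a weakly minimal
anti-symmetric `G`-gapped `A∞` algebra, and fix an isomorphism of graded algebras
`θ : ΛV → A_C = C` as in the definition of anti-symmetry, where `V` is concentrated in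
odd degrees.  Then each `m_{k,β}` is an anti-symmetric Hochschild cochain:
`m_{k,β}(θ(v₁),…,θ(v_k)) = −(−1)^{s(τ;v)} m_{k,β}(θ(v_k),…,θ(v₁))` for homogeneous
`v₁,…,v_k ∈ V`. -/
theorem antiSymmetric_hochschild_cochain {𝕂 : Type} [Field 𝕂] {N : ℕ} (hN : 2 ∣ N)
    (G : AddSubmonoid ℝ) (hGnn : ∀ x ∈ G, (0 : ℝ) ≤ x)
    (hGfin : ∀ E : ℝ, {x : ℝ | x ∈ G ∧ x ≤ E}.Finite)
    {C : Type} [AddCommGroup C] [Module 𝕂 C] (ℳ : ZMod N → Submodule 𝕂 C)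
    [DirectSum.Decomposition ℳ]
    (m : ∀ k : ℕ, G → (Fin k → C) → C) (hm : IsGappedAinf 𝕂 G ℳ m)
    (hwm : m 1 0 = 0)
    (c : C →ₗ[𝕂] C) (hcinv : ∀ x, c (c x) = x)
    (hcdeg : ∀ (e : ZMod N) (x : C), x ∈ ℳ e → c x ∈ ℳ e)
    (hmsd : IsSelfDualFam 𝕂 ℳ c c m)
    {V : Type} [AddCommGroup V] [Module 𝕂 V] (𝒱 : ZMod N → Submodule 𝕂 V)
    (hodd : ∀ e : ZMod N, par2 e = 0 → 𝒱 e = ⊥)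
    (θ : FreeGCA 𝕂 V 𝒱 ≃ₗ[𝕂] C)
    (hθgr : ∀ e : ZMod N, (gcaGrade 𝕂 V 𝒱 e).map (θ : FreeGCA 𝕂 V 𝒱 →ₗ[𝕂] C) = ℳ e)
    (hθmul : ∀ (a b : ZMod N) (x y : FreeGCA 𝕂 V 𝒱),
      x ∈ gcaGrade 𝕂 V 𝒱 a → y ∈ gcaGrade 𝕂 V 𝒱 b →
      θ (x * y) = sgn2 𝕂 (par2 a) • m 2 0 ![θ x, θ y])
    (hcgen : ∀ (a : ZMod N) (v : V), v ∈ 𝒱 a →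
      c (θ (gcaGen 𝕂 V 𝒱 v)) = -θ (gcaGen 𝕂 V 𝒱 v)) :
    ∀ (k : ℕ) (β : G) (a : Fin k → ZMod N) (v : Fin k → V), (∀ j, v j ∈ 𝒱 (a j)) →
      m k β (fun j => θ (gcaGen 𝕂 V 𝒱 (v j)))
        = -(sgn2 𝕂 (revSign a) • m k β fun j => θ (gcaGen 𝕂 V 𝒱 (v (Fin.rev j)))) := by
  intro k β a v hv
  have hmem : ∀ j, θ (gcaGen 𝕂 V 𝒱 (v j)) ∈ ℳ (a j) := fun j => by
    rw [← hθgr (a j)]; exact ⟨_, gen_mem_grade (hv j), rfl⟩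
  by_cases hex : ∃ j₀, v j₀ = 0
  · obtain ⟨j₀, hj₀⟩ := hex
    have h1 : m k β (fun j => θ (gcaGen 𝕂 V 𝒱 (v j))) = 0 :=
      multilin_zero (hm.multilinear k β) _ j₀ (by simp [hj₀, gcaGen])
    have h2 : m k β (fun j => θ (gcaGen 𝕂 V 𝒱 (v (Fin.rev j)))) = 0 :=
      multilin_zero (hm.multilinear k β) _ (Fin.rev j₀)
        (by rw [Fin.rev_rev]; simp [hj₀, gcaGen])
    rw [h1, h2]
    simp
  · push_neg at hex
    have hodd1 : ∀ j, par2 (a j) = 1 := fun j => by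
      rcases em2 (par2 (a j)) with h | h
      · exfalso
        apply hex j
        have := hodd _ h ▸ hv j
        simpa using this
      · exact h
    have hrs : revSign a = 0 := revSign_all_odd a hodd1
    have hsd := hmsd k β a _ hmem
    have hfun : (fun j => c (θ (gcaGen 𝕂 V 𝒱 (v j))))
        = fun j => -θ (gcaGen 𝕂 V 𝒱 (v j)) := funext fun j => hcgen _ _ (hv j)
    have hneg := multilin_neg (hm.multilinear k β) (fun j => θ (gcaGen 𝕂 V 𝒱 (v j)))
    rw [hfun] at hsd
    simp only [hneg] at hsd
    -- degree of the reversed output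
    have hu := hm.deg k β (fun j => a (Fin.rev j))
      (fun j => θ (gcaGen 𝕂 V 𝒱 (v (Fin.rev j)))) (fun j => hmem (Fin.rev j))
    have hparE : par2 ((∑ j, a (Fin.rev j)) + (((2 - (k : ℤ)) : ℤ) : ZMod N)) = 0 := by
      rw [par2_add hN, par2_sum hN, par2_intCast hN]
      have h1 : ∑ j : Fin k, par2 (a (Fin.rev j)) = ((k : ℕ) : ZMod 2) := by
        rw [Finset.sum_congr rfl (fun j _ => hodd1 (Fin.rev j))]
        simp
      rw [h1]
      have h2 : (((2 - (k : ℤ)) : ℤ) : ZMod 2) = 2 - ((k : ℕ) : ZMod 2) := by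
        push_cast; ring
      rw [h2]
      have h3 : (2 : ZMod 2) = 0 := by decide
      linear_combination h3
    rw [← hθgr _] at hu
    obtain ⟨xu, hxu, hθxu⟩ := hu
    have hcu : c (m k β (fun j => θ (gcaGen 𝕂 V 𝒱 (v (Fin.rev j)))))
        = m k β (fun j => θ (gcaGen 𝕂 V 𝒱 (v (Fin.rev j)))) := by
      rw [← hθxu]
      rw [show (θ : FreeGCA 𝕂 V 𝒱 →ₗ[𝕂] C) xu = θ xu from rfl]
      rw [c_theta_grade hN ℳ m hm.multilinear c hcinv hcdeg hmsd 𝒱 hodd θ hθgr hθmul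
        hcgen _ xu hxu, hparE, sgn2_zero, one_smul]
    rw [hcu, sgn2_natCast_pow] at hsd
    rw [hrs, sgn2_zero, one_smul]
    calc m k β (fun j => θ (gcaGen 𝕂 V 𝒱 (v j)))
        = sgn2 𝕂 ((k : ℕ) : ZMod 2) • sgn2 𝕂 ((k : ℕ) : ZMod 2)
            • m k β (fun j => θ (gcaGen 𝕂 V 𝒱 (v j))) := (sgn2_smul_cancel _ _).symm
      _ = sgn2 𝕂 ((k : ℕ) : ZMod 2) • sgn2 𝕂 (revSign a + ((k : ℕ) : ZMod 2) + 1)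
            • m k β (fun j => θ (gcaGen 𝕂 V 𝒱 (v (Fin.rev j)))) := by rw [hsd]
      _ = sgn2 𝕂 (((k : ℕ) : ZMod 2) + (revSign a + ((k : ℕ) : ZMod 2) + 1))
            • m k β (fun j => θ (gcaGen 𝕂 V 𝒱 (v (Fin.rev j)))) := by
          rw [smul_smul, ← sgn2_add]
      _ = -m k β (fun j => θ (gcaGen 𝕂 V 𝒱 (v (Fin.rev j)))) := by
          rw [hrs]
          rw [show (((k : ℕ) : ZMod 2) + (0 + ((k : ℕ) : ZMod 2) + 1)) = 1 by
            rcases em2 ((k : ℕ) : ZMod 2) with h | h <;> rw [h] <;> decide]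
          rw [sgn2_one, neg_one_smul]
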